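/- Let a and s be complex numbers with s² = 9 − 8a, and let k be a natural number. Assume that (a−1) + m ≠ 0, (1 − a − k) + m ≠ 0, (2a − 5/2 − s/2) + m ≠ 0 and (2a − 5/2 + s/2) + m ≠ 0 for every natural number m < k (in particular a ≠ 1). Then [(a+k−1) / ((a−1) · k!)] · ∑_{j=0}^{k} (a)_j (2−a−k)_j (−k)_j (−1)^j / ((a−1)_j (1−a−k)_j · j!) = [(2a − 3/2 − s/2)_k · (2a − 3/2 + s/2)_k] / [(2a − 5/2 − s/2)_k · (2a − 5/2 + s/2)_k] · 2^k / k!. (This is a ₃F₂(−1) evaluation by a nonrational hypergeometric term.) -/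

import Mathlib

/-!
Both sides are rational functions of `a` in disguise. On the left, `(x + 1)_j / (x)_j = (x + j) / x`
and `(-k)_j (-1)^j / j! = C(k, j)`, so the sum is `∑ C(k, j) (c + j) (d + j) / (c d)` with
`c = a - 1`, `d = 1 - a - k`, a binomial moment computed in closed form. On the right each
quotient of Pochhammer symbols telescopes to `(q + k) / q` with `q = 2a - 5/2 ∓ s/2`, and the
relation `s² = 9 - 8a` turns `(q₁ + k)(q₂ + k) / (q₁ q₂)` into `((2c + k)² - k) / (4c²)`, which is
also what the left side equals.
-/

/-- Rising factorial (Pochhammer symbol) `(z)_n` over the complex numbers. -/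
noncomputable def poch (z : ℂ) (n : ℕ) : ℂ := (ascPochhammer ℂ n).eval z

open Finset

lemma poch_ne_zero {x : ℂ} {n : ℕ} (h : ∀ m < n, x + m ≠ 0) : poch x n ≠ 0 := by
  rintro hx
  obtain ⟨m, hm, hmx⟩ := (ascPochhammer_eval_eq_zero_iff n x).mp hx
  exact h m hm (by rw [hmx]; ring)

lemma poch_add_one_mul (x : ℂ) (n : ℕ) : poch (x + 1) n * x = poch x n * (x + n) := by
  have h := ascPochhammer_succ_eval n x
  rw [ascPochhammer_succ_left, Polynomial.eval_mul, Polynomial.eval_X, Polynomial.eval_comp,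
    Polynomial.eval_add, Polynomial.eval_X, Polynomial.eval_one] at h
  rw [poch, poch, mul_comm, h]

lemma poch_add_one_div_poch {x : ℂ} {n : ℕ} (hx : x ≠ 0) (hpx : poch x n ≠ 0) :
    poch (x + 1) n / poch x n = (x + n) / x := by
  rw [div_eq_div_iff hpx hx, poch_add_one_mul, mul_comm]

lemma poch_neg_natCast_mul_neg_one_pow_div_factorial (k j : ℕ) :
    poch (-(k : ℂ)) j * (-1) ^ j / (j.factorial : ℂ) = k.choose j := by
  rw [poch, ascPochhammer_eval_neg_eq_descPochhammer, mul_right_comm, ← mul_pow]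
  simp [Nat.cast_choose_eq_descPochhammer_div]

lemma sum_choose_mul_add_mul_add_mul_four {R : Type*} [CommRing R] (k : ℕ) (x y : R) :
    (∑ j ∈ range (k + 1), (k.choose j : R) * ((x + j) * (y + j))) * 4
      = 2 ^ k * ((2 * x + k) * (2 * y + k) + k) := by
  induction k generalizing x y with
  | zero =>
    simp only [zero_add, range_one, sum_singleton, Nat.choose_self, Nat.cast_one, Nat.cast_zero]
    ring
  | succ k ih =>
    rw [sum_choose_succ_mul (fun j _ => (x + (j : R)) * (y + j)) k]
    have shift (j : ℕ) : (x + ((j + 1 : ℕ) : R)) * (y + ((j + 1 : ℕ) : R))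
        = (x + 1 + j) * (y + 1 + j) := by
      push_cast; ring
    simp only [shift]
    rw [add_mul, ih, ih]
    push_cast
    ring

lemma hypergeometric_term_eq_choose_mul {c d : ℂ} (k j : ℕ) (hc : c ≠ 0) (hd : d ≠ 0)
    (hpc : poch c j ≠ 0) (hpd : poch d j ≠ 0) :
    poch (c + 1) j * poch (d + 1) j * poch (-(k : ℂ)) j * (-1) ^ j /
        (poch c j * poch d j * (j.factorial : ℂ))
      = k.choose j * ((c + j) * (d + j)) / (c * d) := by
  rw [mul_assoc _ (poch _ j), mul_div_mul_comm, mul_div_mul_comm, poch_add_one_div_poch hc hpc,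
    poch_add_one_div_poch hd hpd, poch_neg_natCast_mul_neg_one_pow_div_factorial]
  ring

lemma sum_hypergeometric_term_eq {c d : ℂ} {k : ℕ} (hc : c ≠ 0) (hd : d ≠ 0)
    (hpc : ∀ m < k, c + m ≠ 0) (hpd : ∀ m < k, d + m ≠ 0) :
    ∑ j ∈ range (k + 1), poch (c + 1) j * poch (d + 1) j * poch (-(k : ℂ)) j * (-1) ^ j /
        (poch c j * poch d j * (j.factorial : ℂ))
      = 2 ^ k * ((2 * c + k) * (2 * d + k) + k) / (4 * (c * d)) := by
  have hterm (j) (hj : j ∈ range (k + 1)) := hypergeometric_term_eq_choose_mul k j hc hd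
    (poch_ne_zero fun m hm => hpc m (by grind)) (poch_ne_zero fun m hm => hpd m (by grind))
  rw [sum_congr rfl hterm, ← sum_div,
    eq_div_of_mul_eq (by norm_num) (sum_choose_mul_add_mul_add_mul_four k c d), div_div]

theorem stmt_12 (a s : ℂ) (hs : s ^ 2 = 9 - 8 * a) (k : ℕ)
    (h1 : ∀ m : ℕ, m < k → a - 1 + (m : ℂ) ≠ 0)
    (h2 : ∀ m : ℕ, m < k → 1 - a - (k : ℂ) + (m : ℂ) ≠ 0)
    (h3 : ∀ m : ℕ, m < k → 2 * a - 5 / 2 - s / 2 + (m : ℂ) ≠ 0)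
    (h4 : ∀ m : ℕ, m < k → 2 * a - 5 / 2 + s / 2 + (m : ℂ) ≠ 0)
    (ha : a ≠ 1) :
    ((a + (k : ℂ) - 1) / ((a - 1) * (k.factorial : ℂ))) *
        ∑ j ∈ Finset.range (k + 1),
          poch a j * poch (2 - a - (k : ℂ)) j * poch (-(k : ℂ)) j * (-1 : ℂ) ^ j /
            (poch (a - 1) j * poch (1 - a - (k : ℂ)) j * (j.factorial : ℂ))
      = (poch (2 * a - 3 / 2 - s / 2) k * poch (2 * a - 3 / 2 + s / 2) k) /
          (poch (2 * a - 5 / 2 - s / 2) k * poch (2 * a - 5 / 2 + s / 2) k)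
        * 2 ^ k / (k.factorial : ℂ) := by
  have hc : a - 1 ≠ 0 := sub_ne_zero.mpr ha
  have hd : 1 - a - (k : ℂ) ≠ 0 := by
    rcases k.eq_zero_or_pos with rfl | hk
    · simpa using sub_ne_zero.mpr (Ne.symm ha)
    · simpa using h2 0 hk
  have hsum := sum_hypergeometric_term_eq hc hd h1 h2
  rw [sub_add_cancel, show 1 - a - (k : ℂ) + 1 = 2 - a - k by ring] at hsum
  have hq : (2 * a - 5 / 2 - s / 2) * (2 * a - 5 / 2 + s / 2) = 4 * (a - 1) ^ 2 := by
    linear_combination (-1 / 4 : ℂ) * hs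
  have hqk : (2 * a - 5 / 2 - s / 2 + k) * (2 * a - 5 / 2 + s / 2 + k)
      = (2 * (a - 1) + k) ^ 2 - k := by
    linear_combination (-1 / 4 : ℂ) * hs
  obtain ⟨hq1, hq2⟩ : 2 * a - 5 / 2 - s / 2 ≠ 0 ∧ 2 * a - 5 / 2 + s / 2 ≠ 0 := by
    rw [← mul_ne_zero_iff, hq]
    exact mul_ne_zero (by norm_num) (pow_ne_zero 2 hc)
  rw [hsum, mul_div_mul_comm (poch _ k),
    show 2 * a - 3 / 2 - s / 2 = 2 * a - 5 / 2 - s / 2 + 1 by ring,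
    show 2 * a - 3 / 2 + s / 2 = 2 * a - 5 / 2 + s / 2 + 1 by ring,
    poch_add_one_div_poch hq1 (poch_ne_zero h3), poch_add_one_div_poch hq2 (poch_ne_zero h4),
    div_mul_div_comm (_ + (k : ℂ)), hq, hqk]
  field_simp
  ring
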